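/- There exists a homeomorphism η : Σ_{2,0} → Σ_{≥0} such that O_0 ∘ η = η ∘ O, where O is the dyadic odometer restricted to Σ_{2,0}. That is, the 0-odometer on the Baire-type space Σ_{≥0} is topologically conjugate to the dyadic odometer restricted to the set of binary sequences not ending in a tail of ones. -/

import Mathlib

open Filter
open scoped Classical

/-- The dyadic odometer on `Σ₂ = {0,1}^ℕ` (with `true = 1`, `false = 0`):
addition of `(1,0,0,…)` with carry over, and the all-ones sequence is sent
to the all-zeroes sequence. -/
noncomputable def dyadicOdometer (w : ℕ → Bool) : ℕ → Bool :=
  if h : ∃ k, w k = false then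
    fun i => if i < Nat.find h then false else if i = Nat.find h then true else w i
  else fun _ => false

/-- The `0`-odometer on the Baire-type space `ℕ₀^ℕ`:
`O₀(w₁,w₂,w₃,…) = (0,…,0 (w₁ times), w₂+1, w₃, …)`. -/
def baireOdometer (w : ℕ → ℕ) : ℕ → ℕ := fun i =>
  if i < w 0 then 0
  else if i = w 0 then w 1 + 1
  else w (i - w 0 + 1)

/-- `Σ_{2,0}`: binary sequences which are not eventually constantly `1`. -/
def Sigma20 : Set (ℕ → Bool) := {w | ¬ ∀ᶠ i in atTop, w i = true}

/-!
A sequence in `Sigma20` has infinitely many zeros; `η` records the gaps between them, i.e. the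
number of ones before the first zero and between consecutive zeros. Adding one with carry
turns the leading block `1^k 0` into `0^k 1`, which on gap sequences is exactly
`(k, a₁, a₂, …) ↦ (0, …, 0, a₁ + 1, a₂, …)`. Each coordinate of `η` and of `η⁻¹` depends only on
finitely many coordinates of the argument, so both are continuous.
-/

open Topology

theorem StrictMono.nth_mem_range_eq {f : ℕ → ℕ} (hf : StrictMono f) :
    Nat.nth (· ∈ Set.range f) = f := by
  have hinf : (Set.range f).Infinite := Set.infinite_range_of_injective hf.injective
  funext n
  refine (Nat.eq_nth_of_strictMonoOn_of_mapsTo_of_surjOn f ?_ ?_ (hf.strictMonoOn _) ?_).symm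
  · rintro _ ⟨m, rfl⟩
    exact ⟨m, fun h => (hinf h).elim, rfl⟩
  · exact fun m _ => ⟨m, rfl⟩
  · exact fun h => (hinf h).elim

theorem Nat.nth_congr_of_forall_le {p q : ℕ → Prop} (hp : {i | p i}.Infinite) {n : ℕ}
    (h : ∀ j ≤ Nat.nth p n, q j ↔ p j) : Nat.nth q n = Nat.nth p n := by
  classical
  have hq : q (Nat.nth p n) := (h _ le_rfl).2 (Nat.nth_mem_of_infinite hp n)
  have hcount : Nat.count q (Nat.nth p n) = n := by
    refine Eq.trans ?_ (Nat.count_nth_of_infinite hp n)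
    rw [Nat.count_eq_card_filter_range, Nat.count_eq_card_filter_range]
    exact congrArg Finset.card
      (Finset.filter_congr fun j hj => h j (Finset.mem_range.1 hj).le)
  simpa [hcount] using Nat.nth_count hq

theorem continuous_of_forall_eqOn_Iic {X α β : Type*} [TopologicalSpace X]
    [TopologicalSpace α] [DiscreteTopology α] [TopologicalSpace β] {g : X → ℕ → α}
    (hg : Continuous g) {f : X → β}
    (hf : ∀ x, ∃ N, ∀ y, (∀ j ≤ N, g y j = g x j) → f y = f x) : Continuous f := by
  refine continuous_iff_continuousAt.2 fun x => ?_
  obtain ⟨N, hN⟩ := hf x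
  have hnear : ∀ᶠ y in 𝓝 x, ∀ j ∈ Set.Iic N, g y j = g x j := by
    refine (eventually_all_finite (Set.finite_Iic N)).2 fun j _ => ?_
    have := ((continuous_apply j).comp hg).tendsto x
    rwa [nhds_discrete α, tendsto_pure] at this
  exact EventuallyEq.continuousAt (hnear.mono fun y hy => hN y hy)

namespace OdometerConjugacy

def fromGaps (a : ℕ → ℕ) : ℕ → ℕ
  | 0 => a 0
  | n + 1 => fromGaps a n + a (n + 1) + 1

def gaps (f : ℕ → ℕ) : ℕ → ℕ
  | 0 => f 0
  | n + 1 => f (n + 1) - f n - 1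

theorem fromGaps_strictMono (a : ℕ → ℕ) : StrictMono (fromGaps a) :=
  strictMono_nat_of_lt_succ fun n => by simp only [fromGaps]; omega

theorem gaps_fromGaps (a : ℕ → ℕ) : gaps (fromGaps a) = a := by
  funext n
  cases n with
  | zero => rfl
  | succ n => simp only [gaps, fromGaps]; omega

theorem fromGaps_gaps {f : ℕ → ℕ} (hf : StrictMono f) : fromGaps (gaps f) = f := by
  funext n
  induction n with
  | zero => rfl
  | succ n ih =>
    have := hf (Nat.lt_add_one n)
    simp only [fromGaps, gaps, ih]
    omega

theorem fromGaps_congr {a b : ℕ → ℕ} {n : ℕ} (h : ∀ j ≤ n, a j = b j) :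
    fromGaps a n = fromGaps b n := by
  induction n with
  | zero => exact h 0 le_rfl
  | succ n ih =>
    simp only [fromGaps, ih fun j hj => h j (hj.trans n.le_succ), h (n + 1) le_rfl]

theorem gaps_congr {f g : ℕ → ℕ} {n : ℕ} (h : ∀ j ≤ n, f j = g j) : gaps f n = gaps g n := by
  cases n with
  | zero => exact h 0 le_rfl
  | succ n => simp only [gaps, h (n + 1) le_rfl, h n n.le_succ]

noncomputable def zeroPos (w : ℕ → Bool) : ℕ → ℕ := Nat.nth (w · = false)

noncomputable def ofZeroPos (f : ℕ → ℕ) (i : ℕ) : Bool := decide (i ∉ Set.range f)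

theorem ofZeroPos_eq_false {f : ℕ → ℕ} {i : ℕ} : ofZeroPos f i = false ↔ i ∈ Set.range f := by
  simp [ofZeroPos]

theorem zeroPos_strictMono {w : ℕ → Bool} (hw : {i | w i = false}.Infinite) :
    StrictMono (zeroPos w) :=
  Nat.nth_strictMono hw

theorem zeroPos_ofZeroPos {f : ℕ → ℕ} (hf : StrictMono f) : zeroPos (ofZeroPos f) = f := by
  simpa only [zeroPos, ofZeroPos_eq_false] using hf.nth_mem_range_eq

theorem ofZeroPos_zeroPos {w : ℕ → Bool} (hw : {i | w i = false}.Infinite) :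
    ofZeroPos (zeroPos w) = w := by
  funext i
  rw [ofZeroPos, zeroPos, Nat.range_nth_of_infinite hw]
  simp

theorem zeroPos_congr {w v : ℕ → Bool} (hw : {i | w i = false}.Infinite) {n : ℕ}
    (h : ∀ j ≤ zeroPos w n, v j = w j) : zeroPos v n = zeroPos w n :=
  Nat.nth_congr_of_forall_le hw fun j hj => by rw [h j hj]

theorem ofZeroPos_congr {f g : ℕ → ℕ} (hf : StrictMono f) (hg : StrictMono g) {i : ℕ}
    (h : ∀ j ≤ i, f j = g j) : ofZeroPos f i = ofZeroPos g i := by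
  have key : ∀ {f g : ℕ → ℕ}, StrictMono f → (∀ j ≤ i, f j = g j) →
      i ∈ Set.range f → i ∈ Set.range g := by
    rintro f g hf h ⟨j, rfl⟩
    exact ⟨j, (h j (hf.id_le j)).symm⟩
  simp only [ofZeroPos, decide_eq_decide]
  exact not_congr ⟨key hf h, key hg fun j hj => (h j hj).symm⟩

theorem mem_sigma20_iff {w : ℕ → Bool} : w ∈ Sigma20 ↔ {i | w i = false}.Infinite := by
  rw [Sigma20, Set.mem_ofPred_eq, not_eventually, ← Nat.frequently_atTop_iff_infinite]
  simp only [Bool.not_eq_true]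

theorem ofZeroPos_mem_sigma20 {f : ℕ → ℕ} (hf : StrictMono f) : ofZeroPos f ∈ Sigma20 := by
  simpa only [mem_sigma20_iff, ofZeroPos_eq_false, Set.ofPred_mem_eq] using
    Set.infinite_range_of_injective hf.injective

theorem dyadicOdometer_eq_of_first_false {w : ℕ → Bool} {k : ℕ} (hk : w k = false)
    (hlt : ∀ j < k, w j = true) :
    dyadicOdometer w = fun i => if i < k then false else if i = k then true else w i := by
  have hex : ∃ k, w k = false := ⟨k, hk⟩
  have hfind : Nat.find hex = k :=
    (Nat.find_eq_iff hex).2 ⟨hk, fun j hj => by simp [hlt j hj]⟩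
  rw [dyadicOdometer, dif_pos hex, hfind]

section baireOdometer

variable (a : ℕ → ℕ)

theorem baireOdometer_of_lt {i : ℕ} (h : i < a 0) : baireOdometer a i = 0 := by
  simp [baireOdometer, h]

theorem baireOdometer_self : baireOdometer a (a 0) = a 1 + 1 := by
  simp [baireOdometer]

theorem baireOdometer_add_add_one (m : ℕ) : baireOdometer a (a 0 + m + 1) = a (m + 2) := by
  simp only [baireOdometer]
  rw [if_neg (by omega), if_neg (by omega)]
  congr 1
  omega

theorem fromGaps_baireOdometer_of_lt {n : ℕ} (h : n < a 0) :
    fromGaps (baireOdometer a) n = n := by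
  induction n with
  | zero => exact baireOdometer_of_lt a h
  | succ n ih => simp only [fromGaps, ih (by omega), baireOdometer_of_lt a h]

theorem fromGaps_baireOdometer_add (m : ℕ) :
    fromGaps (baireOdometer a) (a 0 + m) = fromGaps a (m + 1) := by
  induction m with
  | zero =>
    have hself := baireOdometer_self a
    show fromGaps (baireOdometer a) (a 0) = a 0 + a 1 + 1
    cases h : a 0 with
    | zero => rw [fromGaps, ← h, hself]; omega
    | succ k => rw [fromGaps, fromGaps_baireOdometer_of_lt a (by omega), ← h, hself]; omega
  | succ m ih =>
    rw [← add_assoc, fromGaps, ih, baireOdometer_add_add_one]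
    rfl

theorem mem_range_fromGaps_baireOdometer {i : ℕ} :
    i ∈ Set.range (fromGaps (baireOdometer a)) ↔ i < a 0 ∨ ∃ m, fromGaps a (m + 1) = i := by
  constructor
  · rintro ⟨n, rfl⟩
    rcases lt_or_ge n (a 0) with h | h
    · exact .inl ((fromGaps_baireOdometer_of_lt a h).symm ▸ h)
    · obtain ⟨m, rfl⟩ := Nat.exists_eq_add_of_le h
      exact .inr ⟨m, (fromGaps_baireOdometer_add a m).symm⟩
  · rintro (h | ⟨m, rfl⟩)
    · exact ⟨i, fromGaps_baireOdometer_of_lt a h⟩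
    · exact ⟨a 0 + m, fromGaps_baireOdometer_add a m⟩

theorem dyadicOdometer_ofZeroPos_fromGaps :
    dyadicOdometer (ofZeroPos (fromGaps a)) = ofZeroPos (fromGaps (baireOdometer a)) := by
  have hmono := fromGaps_strictMono a
  have hgt : ∀ m, a 0 < fromGaps a (m + 1) := fun m => hmono m.succ_pos
  have hfirst : ofZeroPos (fromGaps a) (a 0) = false := ofZeroPos_eq_false.2 ⟨0, rfl⟩
  have hbefore : ∀ j < a 0, ofZeroPos (fromGaps a) j = true := by
    intro j hj
    rw [ofZeroPos, decide_eq_true_iff]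
    rintro ⟨n, rfl⟩
    exact hj.not_ge (hmono.monotone n.zero_le)
  rw [dyadicOdometer_eq_of_first_false hfirst hbefore]
  funext i
  split_ifs with hlt heq
  · exact (ofZeroPos_eq_false.2 ((mem_range_fromGaps_baireOdometer a).2 (.inl hlt))).symm
  · subst heq
    rw [ofZeroPos, eq_comm, decide_eq_true_iff, mem_range_fromGaps_baireOdometer]
    rintro (h | ⟨m, hm⟩)
    · exact lt_irrefl _ h
    · exact (hgt m).ne' hm
  · simp only [ofZeroPos, decide_eq_decide, mem_range_fromGaps_baireOdometer, hlt, false_or]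
    refine not_congr ⟨?_, fun ⟨m, hm⟩ => ⟨m + 1, hm⟩⟩
    rintro ⟨_ | m, rfl⟩
    · exact absurd rfl heq
    · exact ⟨m, rfl⟩

end baireOdometer

noncomputable def gapsHomeomorph : Sigma20 ≃ₜ (ℕ → ℕ) where
  toFun w := gaps (zeroPos w)
  invFun a := ⟨ofZeroPos (fromGaps a), ofZeroPos_mem_sigma20 (fromGaps_strictMono a)⟩
  left_inv w := by
    have hw := mem_sigma20_iff.1 w.2
    refine Subtype.ext (show ofZeroPos (fromGaps (gaps (zeroPos w))) = w from ?_)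
    rw [fromGaps_gaps (zeroPos_strictMono hw), ofZeroPos_zeroPos hw]
  right_inv a := by
    change gaps (zeroPos (ofZeroPos (fromGaps a))) = a
    rw [zeroPos_ofZeroPos (fromGaps_strictMono a), gaps_fromGaps]
  continuous_toFun := by
    refine continuous_pi fun n => continuous_of_forall_eqOn_Iic continuous_subtype_val
      fun w => ⟨zeroPos w n, fun v hv => gaps_congr fun j hj => ?_⟩
    have hw := mem_sigma20_iff.1 w.2
    exact zeroPos_congr hw fun i hi =>
      hv i (hi.trans ((zeroPos_strictMono hw).monotone hj))
  continuous_invFun := by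
    refine Continuous.subtype_mk (continuous_pi fun i => continuous_of_forall_eqOn_Iic
      continuous_id fun a => ⟨i, fun b hb => ?_⟩) _
    exact ofZeroPos_congr (fromGaps_strictMono b) (fromGaps_strictMono a) fun j hj =>
      fromGaps_congr fun k hk => hb k (hk.trans hj)

end OdometerConjugacy

open OdometerConjugacy in
theorem dyadic_odometer_conjugate_baire_odometer :
    ∃ η : Sigma20 ≃ₜ (ℕ → ℕ),
      ∀ w : Sigma20, ∃ hw : dyadicOdometer (w : ℕ → Bool) ∈ Sigma20,
        baireOdometer (η w) = η ⟨dyadicOdometer (w : ℕ → Bool), hw⟩ := by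
  refine ⟨gapsHomeomorph, fun w => ?_⟩
  have hconj : dyadicOdometer w =
      (gapsHomeomorph.symm (baireOdometer (gapsHomeomorph w)) : ℕ → Bool) := by
    conv_lhs => rw [← gapsHomeomorph.symm_apply_apply w]
    exact dyadicOdometer_ofZeroPos_fromGaps _
  refine ⟨hconj ▸ Subtype.prop _, ?_⟩
  simp only [hconj, Subtype.coe_eta, Homeomorph.apply_symm_apply]
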